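/- arXiv:math/0509646 — 7 statements merged into one kernel-verified Lean document; each statement's English description precedes it below -/
import Mathlib

section
/- Let A be a commutative ring with no nontrivial idempotents, and let a be a unit of the Laurent series ring A((t)). Then there exists an integer n such that the coefficient of t^n in a is a unit of A and the coefficient of t^i in a is nilpotent for every integer i < n. -/
/-!
Write `ord_p(a)` for the order of the image of `a` in `(A/p)((t))`. Since `A/p` is a domain,
`ord_p(a) = n` exactly when neither the `t^n` coefficient of `a` nor the `t^(-n)` coefficient
of `a⁻¹` lies in `p`, so `p ↦ ord_p(a)` is locally constant on `Spec A`. Without nontrivial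
idempotents `Spec A` is connected, so `ord_p(a) = n` for a single `n` and all `p`: then the
`t^n` coefficient lies in no prime ideal, hence is a unit, and every lower coefficient lies in
all prime ideals, hence is nilpotent.
-/

open PrimeSpectrum

namespace PrimeSpectrum

variable {A : Type*} [CommRing A]

theorem preconnectedSpace_of_isIdempotentElem
    (hA : ∀ e : A, IsIdempotentElem e → e = 0 ∨ e = 1) :
    PreconnectedSpace (PrimeSpectrum A) := by
  refine preconnectedSpace_iff_clopen.mpr fun s hs => ?_
  obtain ⟨e, he, rfl⟩ := exists_idempotent_basicOpen_eq_of_isClopen hs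
  rcases hA e he with rfl | rfl
  · exact .inl (by simp)
  · exact .inr (by simp)

theorem isUnit_of_forall_notMem {x : A} (h : ∀ p : PrimeSpectrum A, x ∉ p.asIdeal) :
    IsUnit x := by
  by_contra hx
  obtain ⟨m, hm, hxm⟩ := exists_max_ideal_of_mem_nonunits hx
  exact h ⟨m, hm.isPrime⟩ hxm

theorem isNilpotent_of_forall_mem {x : A} (h : ∀ p : PrimeSpectrum A, x ∈ p.asIdeal) :
    IsNilpotent x :=
  nilpotent_iff_mem_prime.mpr fun J hJ => h ⟨J, hJ⟩

end PrimeSpectrum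

namespace HahnSeries

theorem map_mul_map_eq_one {Γ R S : Type*} [AddCommMonoid Γ] [PartialOrder Γ]
    [IsOrderedCancelAddMonoid Γ] [Semiring R] [Semiring S] (f : R →+* S) {x y : HahnSeries Γ R}
    (h : x * y = 1) : x.map f * y.map f = 1 :=
  calc x.map f * y.map f = (x * y).map f := (HahnSeries.map_mul (f : R →ₙ+* S)).symm
    _ = 1 := by
      rw [h]
      ext g
      simp only [map_coeff, coeff_one, apply_ite f, map_one, map_zero]

theorem order_eq_iff_of_mul_eq_one {Γ R : Type*} [AddCommGroup Γ] [LinearOrder Γ]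
    [IsOrderedAddMonoid Γ] [Ring R] [IsDomain R] {x y : HahnSeries Γ R} (hxy : x * y = 1)
    (n : Γ) : x.order = n ↔ x.coeff n ≠ 0 ∧ y.coeff (-n) ≠ 0 := by
  have hx : x ≠ 0 := left_ne_zero_of_mul_eq_one hxy
  have hy : y ≠ 0 := right_ne_zero_of_mul_eq_one hxy
  have hyx : y.order = -x.order := by
    rw [eq_neg_iff_add_eq_zero, add_comm, ← order_mul hx hy, hxy, order_one]
  constructor
  · rintro rfl
    rw [← hyx]
    exact ⟨coeff_order_eq_zero.not.mpr hx, coeff_order_eq_zero.not.mpr hy⟩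
  · rintro ⟨hxn, hyn⟩
    have hyn := order_le_of_coeff_ne_zero hyn
    rw [hyx, neg_le_neg_iff] at hyn
    exact le_antisymm (order_le_of_coeff_ne_zero hxn) hyn

end HahnSeries

namespace LaurentSeries

variable {A : Type*} [CommRing A]

noncomputable def orderAtPrime (x : LaurentSeries A) (p : PrimeSpectrum A) : ℤ :=
  (x.map (Ideal.Quotient.mk p.asIdeal)).order

theorem coeff_mem_of_lt_orderAtPrime (x : LaurentSeries A) (p : PrimeSpectrum A) {i : ℤ}
    (hi : i < x.orderAtPrime p) : x.coeff i ∈ p.asIdeal :=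
  Ideal.Quotient.eq_zero_iff_mem.mp (HahnSeries.coeff_eq_zero_of_lt_order hi)

theorem orderAtPrime_eq_iff (a : (LaurentSeries A)ˣ) (p : PrimeSpectrum A) (n : ℤ) :
    orderAtPrime a p = n ↔ p ∈ basicOpen ((a : LaurentSeries A).coeff n) ∧
      p ∈ basicOpen ((↑a⁻¹ : LaurentSeries A).coeff (-n)) := by
  simp only [orderAtPrime, HahnSeries.order_eq_iff_of_mul_eq_one
    (HahnSeries.map_mul_map_eq_one (Ideal.Quotient.mk p.asIdeal) a.mul_inv),
    mem_basicOpen, HahnSeries.map_coeff, ne_eq, Ideal.Quotient.eq_zero_iff_mem]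

theorem coeff_orderAtPrime_notMem (a : (LaurentSeries A)ˣ) (p : PrimeSpectrum A) :
    (a : LaurentSeries A).coeff (orderAtPrime a p) ∉ p.asIdeal :=
  ((orderAtPrime_eq_iff a p _).mp rfl).1

theorem isLocallyConstant_orderAtPrime (a : (LaurentSeries A)ˣ) :
    IsLocallyConstant (orderAtPrime (a : LaurentSeries A)) :=
  IsLocallyConstant.iff_isOpen_fiber.mpr fun n => by
    convert (basicOpen ((a : LaurentSeries A).coeff n)).isOpen.inter
      (basicOpen ((↑a⁻¹ : LaurentSeries A).coeff (-n))).isOpen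
    ext p
    exact orderAtPrime_eq_iff a p n

end LaurentSeries

/-- Lemma 4.3.4(a): if `A` is a commutative ring with no nontrivial idempotents,
then any unit `a` of the Laurent series ring `A((t))` admits an integer `n` such
that the coefficient of `t^n` is a unit of `A` and all lower coefficients are
nilpotent. -/
theorem laurent_unit_order_exists (A : Type*) [CommRing A]
    (hA : ∀ e : A, IsIdempotentElem e → e = 0 ∨ e = 1)
    (a : (LaurentSeries A)ˣ) :
    ∃ n : ℤ, IsUnit ((a : LaurentSeries A).coeff n) ∧
      ∀ i : ℤ, i < n → IsNilpotent ((a : LaurentSeries A).coeff i) := by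
  have := preconnectedSpace_of_isIdempotentElem hA
  obtain ⟨n, hn⟩ := (LaurentSeries.isLocallyConstant_orderAtPrime a).exists_eq_const
  refine ⟨n, isUnit_of_forall_notMem fun p => ?_,
    fun i hi => isNilpotent_of_forall_mem fun p => ?_⟩
  · simpa [hn] using LaurentSeries.coeff_orderAtPrime_notMem a p
  · exact LaurentSeries.coeff_mem_of_lt_orderAtPrime _ p (by simpa [hn] using hi)
end

section
/- Let A be a commutative ring and a a Laurent series in A((t)). If there is an integer n such that the coefficient of t^n in a is a unit of A and the coefficient of t^i in a is nilpotent for every integer i < n, then a is a unit of the ring A((t)). -/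
/-!
The coefficients below degree `n` form a Laurent polynomial with nilpotent coefficients, hence a
nilpotent element. What remains has order `n` and a unit leading coefficient, so it is a unit,
and a unit plus a nilpotent is a unit.
-/

namespace HahnSeries

variable {Γ R : Type*}

theorem finite_support_truncLT [Zero Γ] [LinearOrder Γ] [LocallyFiniteOrder Γ] [Zero R]
    (c : Γ) (x : R⟦Γ⟧) : (truncLT c x).support.Finite := by
  refine (Set.finite_Ico x.order c).subset fun i hi => ?_
  rw [support_truncLT] at hi
  exact ⟨not_lt.1 fun h => hi.1 (coeff_eq_zero_of_lt_order h), hi.2⟩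

theorem isNilpotent_of_finite_support [AddCommMonoid Γ] [PartialOrder Γ]
    [IsOrderedCancelAddMonoid Γ] [CommSemiring R] {x : R⟦Γ⟧} (hfin : x.support.Finite)
    (hx : ∀ i, IsNilpotent (x.coeff i)) : IsNilpotent x := by
  have hsum : x = ∑ i ∈ hfin.toFinset, single i (x.coeff i) := by
    ext j
    rw [coeff_sum, Finset.sum_eq_single j (fun i _ hij => coeff_single_of_ne hij.symm)]
    · rw [coeff_single_same]
    · intro hj
      rw [coeff_single_same]
      simpa using hj
  rw [hsum]
  refine isNilpotent_sum fun i _ => ?_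
  obtain ⟨m, hm⟩ := hx i
  exact ⟨m, by rw [single_pow, hm, single_eq_zero]⟩

theorem isUnit_of_isUnit_coeff_of_forall_lt [AddCommGroup Γ] [LinearOrder Γ]
    [IsOrderedAddMonoid Γ] [CommRing R] {x : R⟦Γ⟧} {n : Γ} (hlt : ∀ i < n, x.coeff i = 0)
    (hn : IsUnit (x.coeff n)) : IsUnit x := by
  obtain _ | _ := subsingleton_or_nontrivial R
  · exact isUnit_of_subsingleton x
  have hne : x.coeff n ≠ 0 := hn.ne_zero
  have horder : x.order = n :=
    le_antisymm (order_le_of_coeff_ne_zero hne)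
      ((le_order_iff_forall (ne_zero_of_coeff_ne_zero hne)).2 hlt)
  refine isUnit_of_isUnit_leadingCoeff_AddUnitOrder ?_ (AddGroup.isAddUnit _)
  rwa [leadingCoeff_eq, horder]

end HahnSeries

open HahnSeries

/-- Converse direction of Lemma 4.3.4: if a Laurent series over a commutative ring
has a unit coefficient in some degree `n` with all lower coefficients nilpotent,
then it is a unit of `A((t))`. -/
theorem laurent_isUnit_of_order (A : Type*) [CommRing A]
    (a : LaurentSeries A) (n : ℤ)
    (hn : IsUnit (a.coeff n)) (hn' : ∀ i : ℤ, i < n → IsNilpotent (a.coeff i)) :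
    IsUnit a := by
  have hlow : IsNilpotent (truncLT n a) := by
    refine isNilpotent_of_finite_support (finite_support_truncLT n a) fun i => ?_
    rw [HahnSeries.coeff_truncLT]
    split_ifs with hi
    exacts [hn' i hi, IsNilpotent.zero]
  have hhigh : IsUnit (a - truncLT n a) :=
    isUnit_of_isUnit_coeff_of_forall_lt (n := n) (fun i hi => by simp [hi])
      (by simpa using hn)
  rw [← add_sub_cancel (truncLT n a) a]
  exact hlow.isUnit_add_right_of_commute hhigh (Commute.all _ _)
end

section
/- Let A be a commutative ring, a and b Laurent series in A((t)), and n, m integers such that: the coefficient of t^n in a is a unit of A and the coefficient of t^i in a is nilpotent for all i < n; the coefficient of t^m in b is a unit of A and the coefficient of t^j in b is nilpotent for all j < m. Then the coefficient of t^{n+m} in the product a·b is a unit of A, and the coefficient of t^k in a·b is nilpotent for every k < n + m. (In particular, the order satisfies ord(ab) = ord(a) + ord(b).) -/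
/-!
Every product `a i * b j` contributing to a coefficient of `a * b` in degree at most `n + m`,
other than `a n * b m`, has `i < n` or `j < m` and is therefore nilpotent. Nilpotents are closed
under sums, so the coefficients below `n + m` are nilpotent and the one in degree `n + m` is the
unit `a n * b m` plus a nilpotent.
-/

theorem lt_or_lt_of_add_le_add_of_ne {Γ : Type*} [AddCommMonoid Γ] [LinearOrder Γ]
    [IsOrderedCancelAddMonoid Γ] {i j n m : Γ} (h : i + j ≤ n + m) (hne : (i, j) ≠ (n, m)) :
    i < n ∨ j < m := by
  by_contra! ⟨hni, hmj⟩
  rcases hni.eq_or_lt with rfl | hni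
  · exact hne (by rw [le_antisymm (le_of_add_le_add_left h) hmj])
  · exact (add_lt_add_of_lt_of_le hni hmj).not_ge h

namespace HahnSeries

variable {Γ R : Type*} [AddCommMonoid Γ] [LinearOrder Γ] [IsOrderedCancelAddMonoid Γ] [CommRing R]
  {x y : HahnSeries Γ R} {n m : Γ}

section

variable (hx : ∀ i < n, IsNilpotent (x.coeff i)) (hy : ∀ j < m, IsNilpotent (y.coeff j))
include hx hy

theorem isNilpotent_coeff_mul_coeff {i j : Γ} (h : i + j ≤ n + m) (hne : (i, j) ≠ (n, m)) :
    IsNilpotent (x.coeff i * y.coeff j) := by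
  rcases lt_or_lt_of_add_le_add_of_ne h hne with hi | hj
  · exact (Commute.all _ _).isNilpotent_mul_right (hx i hi)
  · exact (Commute.all _ _).isNilpotent_mul_left (hy j hj)

theorem isNilpotent_coeff_mul_of_lt {k : Γ} (hk : k < n + m) : IsNilpotent ((x * y).coeff k) := by
  rw [coeff_mul]
  refine isNilpotent_sum fun ij hij => ?_
  rw [Finset.mem_antidiagonal] at hij
  exact isNilpotent_coeff_mul_coeff hx hy (hij.2.2 ▸ hk.le)
    fun h => hk.ne (by obtain ⟨rfl, rfl⟩ := Prod.mk.inj h; exact hij.2.2.symm)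

theorem isNilpotent_coeff_mul_add_sub :
    IsNilpotent ((x * y).coeff (n + m) - x.coeff n * y.coeff m) := by
  rw [coeff_mul]
  set s := Finset.antidiagonal x.isPWO_support y.isPWO_support (n + m)
  have hrest : ∀ ij ∈ s.erase (n, m), IsNilpotent (x.coeff ij.1 * y.coeff ij.2) := by
    intro ij hij
    rw [Finset.mem_erase, Finset.mem_antidiagonal] at hij
    exact isNilpotent_coeff_mul_coeff hx hy hij.2.2.2.le hij.1
  by_cases hnm : (n, m) ∈ s
  · rw [← Finset.add_sum_erase _ _ hnm, add_sub_cancel_left]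
    exact isNilpotent_sum hrest
  · have hzero : x.coeff n * y.coeff m = 0 := by
      by_contra h
      exact hnm (Finset.mem_antidiagonal.2 ⟨left_ne_zero_of_mul h, right_ne_zero_of_mul h, rfl⟩)
    rw [hzero, sub_zero, ← Finset.erase_eq_of_notMem hnm]
    exact isNilpotent_sum hrest

theorem isUnit_coeff_mul_add (hxn : IsUnit (x.coeff n)) (hym : IsUnit (y.coeff m)) :
    IsUnit ((x * y).coeff (n + m)) := by
  simpa using (isNilpotent_coeff_mul_add_sub hx hy).isUnit_add_left_of_commute
    (hxn.mul hym) (Commute.all _ _)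

end

end HahnSeries

/-- Lemma 4.3.4(b): the order is additive.  If `a` has unit coefficient in degree `n`
with nilpotent lower coefficients, and `b` likewise in degree `m`, then `a * b` has
unit coefficient in degree `n + m` and nilpotent coefficients below `n + m`. -/
theorem laurent_order_mul (A : Type*) [CommRing A]
    (a b : LaurentSeries A) (n m : ℤ)
    (hn  : IsUnit (a.coeff n)) (hn' : ∀ i : ℤ, i < n → IsNilpotent (a.coeff i))
    (hm  : IsUnit (b.coeff m)) (hm' : ∀ j : ℤ, j < m → IsNilpotent (b.coeff j)) :
    IsUnit ((a * b).coeff (n + m)) ∧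
      ∀ k : ℤ, k < n + m → IsNilpotent ((a * b).coeff k) :=
  ⟨HahnSeries.isUnit_coeff_mul_add hn' hm' hn hm,
    fun _ hk => HahnSeries.isNilpotent_coeff_mul_of_lt hn' hm' hk⟩
end

section
/- Let A be a commutative ring and a a unit of the Laurent series ring A((t)). Then there exist a natural number k, idempotents e_1, …, e_k of A with e_i·e_j = 0 for i ≠ j and e_1 + ⋯ + e_k = 1, and integers n_1, …, n_k, such that for each i: there exists b ∈ A with e_i · (coefficient of t^{n_i} in a) · b = e_i (i.e. e_i·a_{n_i} is invertible in the ring e_i·A), and e_i · (coefficient of t^j in a) is nilpotent for every integer j < n_i. -/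
/-!
Modulo a prime `p` of `A`, the unit `a` becomes a unit of `(A ⧸ p)((t))`, and over a domain a
unit has a well-defined order `n(p)`, namely the unique `m` with `a_m · (a⁻¹)_{-m} ∉ p`.
Hence `p ↦ n(p)` is locally constant on `Spec A` with values in a finite interval, its fibres
are clopen and so cut out by complete orthogonal idempotents `e_m`. On `D(e_m)` the coefficient
`a_m` does not vanish while every `a_j` with `j < m` does, which makes `e_m a_m` invertible in
`e_m A` and `e_m a_j` nilpotent.
-/

open HahnSeries PrimeSpectrum

namespace PrimeSpectrum

variable {R : Type*} [CommRing R]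

lemma exists_completeOrthogonalIdempotents_basicOpen_eq_fiber {ι : Type*} [Fintype ι]
    {f : PrimeSpectrum R → ι} (hf : IsLocallyConstant f) :
    ∃ e : ι → R, CompleteOrthogonalIdempotents e ∧
      ∀ i, (basicOpen (e i) : Set (PrimeSpectrum R)) = f ⁻¹' {i} := by
  choose e he hfiber using
    fun i ↦ exists_idempotent_basicOpen_eq_of_isClopen (hf.isClopen_fiber i)
  have mem_iff (i : ι) (x : PrimeSpectrum R) : x ∈ basicOpen (e i) ↔ f x = i := by
    rw [← SetLike.mem_coe, ← hfiber]; rfl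
  have ortho : OrthogonalIdempotents e := by
    refine ⟨he, fun i j hij ↦ ((he i).mul (he j)).eq_zero_of_isNilpotent ?_⟩
    rw [← basicOpen_eq_bot_iff, basicOpen_mul, eq_bot_iff]
    rintro x ⟨hi, hj⟩
    exact hij (((mem_iff i x).mp hi).symm.trans ((mem_iff j x).mp hj))
  refine ⟨e, ⟨ortho, ?_⟩, fun i ↦ (hfiber i).symm⟩
  refine basicOpen_injOn_isIdempotentElem ortho.isIdempotentElem_sum .one ?_
  rw [basicOpen_one, eq_top_iff]
  intro x _ hsum
  have hfx := (mem_iff (f x) x).mpr rfl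
  rw [mem_basicOpen, ← ortho.mul_sum_of_mem (Finset.mem_univ (f x))] at hfx
  exact hfx (x.asIdeal.mul_mem_left _ hsum)

lemma exists_mul_mul_eq_of_basicOpen_le {e r : R} (he : IsIdempotentElem e)
    (h : basicOpen e ≤ basicOpen r) : ∃ b, e * r * b = e := by
  obtain ⟨n, hn⟩ := (basicOpen_le_basicOpen_iff e r).mp h
  obtain ⟨b, hb⟩ := Ideal.mem_span_singleton'.mp (Ideal.mul_mem_left _ e hn)
  rw [← pow_succ', he.pow_succ_eq] at hb
  exact ⟨b, by rw [mul_assoc, mul_comm r, hb, he.eq]⟩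

lemma isNilpotent_mul_of_basicOpen_subset_zeroLocus {e r : R}
    (h : (basicOpen e : Set (PrimeSpectrum R)) ⊆ zeroLocus {r}) : IsNilpotent (e * r) := by
  rw [← basicOpen_eq_bot_iff, basicOpen_mul, eq_bot_iff]
  rintro p ⟨he, hr⟩
  exact hr (Set.singleton_subset_iff.mp (h he))

end PrimeSpectrum

namespace LaurentSeries

variable {A : Type*} [CommRing A]

lemma map_mul_map_inv {B : Type*} [CommRing B] (a : (LaurentSeries A)ˣ) (f : A →+* B) :
    (a : LaurentSeries A).map f * (↑a⁻¹ : LaurentSeries A).map f = 1 := by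
  have := HahnSeries.map_mul f.toNonUnitalRingHom (x := (a : LaurentSeries A)) (y := ↑a⁻¹)
  rw [a.mul_inv] at this
  exact this.symm.trans (HahnSeries.map_one f.toMonoidWithZeroHom)

noncomputable def orderAt (x : LaurentSeries A) (p : PrimeSpectrum A) : ℤ :=
  (x.map (Ideal.Quotient.mk p.asIdeal)).order

lemma coeff_mem_of_lt_orderAt {x : LaurentSeries A} {p : PrimeSpectrum A} {j : ℤ}
    (hj : j < x.orderAt p) :
    x.coeff j ∈ p.asIdeal :=
  Ideal.Quotient.eq_zero_iff_mem.mp (coeff_eq_zero_of_lt_order hj)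

variable (a : (LaurentSeries A)ˣ) (p : PrimeSpectrum A)

lemma map_quotientMk_ne_zero : (a : LaurentSeries A).map (Ideal.Quotient.mk p.asIdeal) ≠ 0 :=
  left_ne_zero_of_mul_eq_one (map_mul_map_inv a _)

lemma coeff_orderAt_notMem : (a : LaurentSeries A).coeff (orderAt a p) ∉ p.asIdeal :=
  Ideal.Quotient.eq_zero_iff_mem.not.mp <|
    coeff_order_eq_zero.not.mpr (map_quotientMk_ne_zero a p)

lemma orderAt_inv : orderAt (↑a⁻¹ : LaurentSeries A) p = -orderAt a p := by
  have h := congrArg order (map_mul_map_inv a (Ideal.Quotient.mk p.asIdeal))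
  rw [order_mul (map_quotientMk_ne_zero a p) (map_quotientMk_ne_zero a⁻¹ p), order_one] at h
  rw [orderAt, orderAt]
  omega

lemma orderAt_eq_iff {m : ℤ} :
    orderAt a p = m ↔
      (a : LaurentSeries A).coeff m * (↑a⁻¹ : LaurentSeries A).coeff (-m) ∉ p.asIdeal := by
  refine ⟨?_, fun h ↦ ?_⟩
  · rintro rfl
    have := coeff_orderAt_notMem a⁻¹ p
    rw [orderAt_inv] at this
    exact p.isPrime.mul_notMem (coeff_orderAt_notMem a p) this
  rcases lt_trichotomy (orderAt a p) m with hlt | heq | hgt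
  · have : -m < orderAt (↑a⁻¹ : LaurentSeries A) p := by rw [orderAt_inv]; omega
    exact absurd (p.asIdeal.mul_mem_left _ (coeff_mem_of_lt_orderAt this)) h
  · exact heq
  · exact absurd (p.asIdeal.mul_mem_right _ (coeff_mem_of_lt_orderAt hgt)) h

lemma order_le_orderAt : (a : LaurentSeries A).order ≤ orderAt a p :=
  order_le_of_coeff_ne_zero fun h ↦ coeff_orderAt_notMem a p (h ▸ p.asIdeal.zero_mem)

lemma orderAt_le_neg_order_inv : orderAt a p ≤ -(↑a⁻¹ : LaurentSeries A).order := by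
  have := order_le_orderAt a⁻¹ p
  rw [orderAt_inv] at this
  omega

lemma isLocallyConstant_orderAt : IsLocallyConstant (orderAt (a : LaurentSeries A)) :=
  IsLocallyConstant.iff_isOpen_fiber.mpr fun m ↦ by
    convert
      (basicOpen ((a : LaurentSeries A).coeff m * (↑a⁻¹ : LaurentSeries A).coeff (-m))).isOpen
    ext p
    exact orderAt_eq_iff a p

end LaurentSeries

open LaurentSeries

/-- Lemma 4.3.4(c): for an arbitrary commutative ring `A` and a unit `a` of `A((t))`,
there is a finite system of orthogonal idempotents `e₁, …, e_k` summing to `1` and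
integers `n₁, …, n_k` such that on each factor `eᵢ·A` the description of part (a)
applies: `eᵢ·a_{nᵢ}` is invertible in `eᵢ·A` and `eᵢ·a_j` is nilpotent for `j < nᵢ`. -/
theorem laurent_unit_order_decomposition (A : Type*) [CommRing A]
    (a : (LaurentSeries A)ˣ) :
    ∃ (k : ℕ) (e : Fin k → A) (n : Fin k → ℤ),
      (∀ i, IsIdempotentElem (e i)) ∧
      (∀ i j, i ≠ j → e i * e j = 0) ∧
      (∑ i, e i) = 1 ∧
      ∀ i,
        (∃ b : A, e i * (a : LaurentSeries A).coeff (n i) * b = e i) ∧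
        ∀ j : ℤ, j < n i → IsNilpotent (e i * (a : LaurentSeries A).coeff j) := by
  let I := Set.Icc (a : LaurentSeries A).order (-(↑a⁻¹ : LaurentSeries A).order)
  let ord (p : PrimeSpectrum A) : I :=
    ⟨orderAt a p, order_le_orderAt a p, orderAt_le_neg_order_inv a p⟩
  have hord : IsLocallyConstant ord :=
    .desc _ Subtype.val (isLocallyConstant_orderAt a) Subtype.val_injective
  obtain ⟨e, he, hfiber⟩ := exists_completeOrthogonalIdempotents_basicOpen_eq_fiber hord
  let σ := (Fintype.equivFin I).symm
  have he' := (CompleteOrthogonalIdempotents.equiv σ).mpr he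
  have orderAt_eq {i p} (hp : p ∈ basicOpen (e (σ i))) : orderAt a p = σ i :=
    congrArg Subtype.val ((hfiber (σ i)).subset hp)
  refine ⟨_, e ∘ σ, fun i ↦ σ i, he'.idem, fun i j hij ↦ he'.ortho hij, he'.complete,
    fun i ↦ ⟨?_, fun j hj ↦ ?_⟩⟩
  · refine exists_mul_mul_eq_of_basicOpen_le (he'.idem i) fun p hp ↦ ?_
    simpa only [mem_basicOpen, orderAt_eq hp] using coeff_orderAt_notMem a p
  · refine isNilpotent_mul_of_basicOpen_subset_zeroLocus fun p hp ↦ ?_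
    exact Set.singleton_subset_iff.mpr (coeff_mem_of_lt_orderAt ((orderAt_eq hp).symm ▸ hj))
end

section
/- Let A be a nontrivial commutative ring with no nontrivial idempotents. Suppose t^n · a₀ · f · g = t^{n'} · a₀' · f' · g' in A((t)), where n, n' are integers, a₀, a₀' are units of A, f and f' are formal power series with constant coefficient 1, and g, g' are Laurent series whose coefficient in degree 0 equals 1, whose coefficients in positive degrees vanish, and whose coefficients in negative degrees are nilpotent. Then n = n', a₀ = a₀', f = f', and g = g'. -/
/-!
Modulo the ideal of series with nilpotent coefficients, `g ≡ 1 ≡ g'`, so `t^n a₀ f` and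
`t^{n'} a₀' f'` agree there; comparing the coefficient in degree `min n n'`, which is a unit on
one side, forces `n = n'`. After cancelling `t^n`, `g'` is `1` plus a nilpotent inside the ring
`A[t⁻¹]` of series without positive-degree terms, hence invertible there. Then
`g g'⁻¹ = (a₀ f)⁻¹ a₀' f'` lies in `A[t⁻¹] ∩ A[[t]] = A`, and comparing degree-`0` coefficients
shows that this constant is `1`.
-/

namespace HahnSeries

section NilCoeff

variable {Γ R : Type*} [AddCommMonoid Γ] [PartialOrder Γ] [IsOrderedCancelAddMonoid Γ]
  [CommRing R]

variable (Γ R) in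
/-- The kernel of reducing coefficients modulo the nilradical. -/
def nilCoeffIdeal : Ideal (HahnSeries Γ R) where
  carrier := {x | ∀ i, IsNilpotent (x.coeff i)}
  zero_mem' _ := by simp
  add_mem' hx hy i := by simpa using (Commute.all _ _).isNilpotent_add (hx i) (hy i)
  smul_mem' c x hx i := by
    rw [smul_eq_mul, coeff_mul]
    exact isNilpotent_sum fun ij _ => (Commute.all _ _).isNilpotent_mul_left (hx ij.2)

theorem isNilpotent_of_support_finite {x : HahnSeries Γ R} (hfin : x.support.Finite)
    (hx : x ∈ nilCoeffIdeal Γ R) : IsNilpotent x := by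
  have hsum : x = ∑ i ∈ hfin.toFinset, single i (x.coeff i) := by
    ext j
    classical
    rw [coeff_sum]
    simp only [coeff_single]
    rw [Finset.sum_ite_eq]
    by_cases h : x.coeff j = 0 <;> simp [h]
  rw [hsum]
  refine isNilpotent_sum fun i _ => ?_
  obtain ⟨k, hk⟩ := hx i
  exact ⟨k, by rw [single_pow, hk, single_eq_zero]⟩

end NilCoeff

theorem isUnit_single_one {Γ R : Type*} [AddCommGroup Γ] [PartialOrder Γ]
    [IsOrderedCancelAddMonoid Γ] [CommSemiring R] (a : Γ) : IsUnit (single a (1 : R)) :=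
  .of_mul_eq_one (single (-a) 1) <| by
    rw [single_mul_single, add_neg_cancel, mul_one, single_zero_one]

end HahnSeries

theorem Ideal.sub_mem_of_mul_eq_mul {R : Type*} [CommRing R] {I : Ideal R} {x y g g' : R}
    (hg : g - 1 ∈ I) (hg' : g' - 1 ∈ I) (h : x * g = y * g') : x - y ∈ I := by
  have hxy : x - y = y * (g' - 1) - x * (g - 1) := by linear_combination h
  rw [hxy]
  exact I.sub_mem (I.mul_mem_left y hg') (I.mul_mem_left x hg)

namespace LaurentSeries

open HahnSeries

variable {A : Type*} [CommRing A]

variable (A) in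
/-- The polynomial ring `A[t⁻¹]` inside `A((t))`. -/
def nonposSubring : Subring (LaurentSeries A) where
  carrier := {x | ∀ i, 0 < i → x.coeff i = 0}
  mul_mem' {x y} hx hy i hi := by
    rw [coeff_mul]
    refine Finset.sum_eq_zero fun ij hij => ?_
    rw [Finset.mem_antidiagonal] at hij
    rcases lt_or_ge 0 ij.1 with h | h
    · rw [hx _ h, zero_mul]
    · rw [hy ij.2 (by omega), mul_zero]
  one_mem' i hi := by rw [coeff_one, if_neg hi.ne']
  add_mem' hx hy i hi := by rw [coeff_add, hx i hi, hy i hi, add_zero]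
  zero_mem' _ _ := rfl
  neg_mem' hx i hi := by rw [coeff_neg, hx i hi, neg_zero]

theorem support_finite_of_mem_nonposSubring {x : LaurentSeries A} (hx : x ∈ nonposSubring A) :
    x.support.Finite :=
  (Set.finite_Icc x.order 0).subset fun i hi =>
    ⟨order_le_of_coeff_ne_zero hi, not_lt.1 fun h => hi (hx i h)⟩

theorem exists_mul_eq_one_of_mem_nonposSubring {g : LaurentSeries A} (hg : g ∈ nonposSubring A)
    (hg1 : g - 1 ∈ nilCoeffIdeal ℤ A) : ∃ v ∈ nonposSubring A, g * v = 1 := by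
  set N : nonposSubring A := ⟨g - 1, sub_mem hg (one_mem _)⟩
  have hN : IsNilpotent N := (IsNilpotent.map_iff (f := (nonposSubring A).subtype)
    Subtype.val_injective).1 (isNilpotent_of_support_finite
      (support_finite_of_mem_nonposSubring N.2) hg1)
  obtain ⟨v, hv⟩ := hN.isUnit_one_add.exists_right_inv
  exact ⟨v, v.2, by simpa [N] using congrArg Subtype.val hv⟩

theorem ofPowerSeries_eq_C_of_mem_nonposSubring {p : PowerSeries A}
    (hp : ofPowerSeries ℤ A p ∈ nonposSubring A) :
    ofPowerSeries ℤ A p = C (PowerSeries.constantCoeff p) := by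
  ext i
  rw [C_apply, coeff_single]
  rcases lt_trichotomy i 0 with h | rfl | h
  · simp [PowerSeries.coeff_coe, h, h.ne]
  · simp [PowerSeries.coeff_coe]
  · rw [hp i h, if_neg h.ne']

theorem sub_one_mem_nilCoeffIdeal {g : LaurentSeries A} (hg0 : g.coeff 0 = 1)
    (hgpos : ∀ i, 0 < i → g.coeff i = 0) (hgneg : ∀ i < 0, IsNilpotent (g.coeff i)) :
    g - 1 ∈ nilCoeffIdeal ℤ A := by
  intro i
  rw [coeff_sub, coeff_one]
  rcases lt_trichotomy i 0 with h | rfl | h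
  · simpa [h.ne] using hgneg i h
  · simp [hg0]
  · simp [hgpos i h, h.ne']

theorem le_of_single_mul_sub_mem_nilCoeffIdeal [Nontrivial A] {n n' : ℤ} {p p' : PowerSeries A}
    (hp : IsUnit (PowerSeries.constantCoeff p))
    (h : single n 1 * ofPowerSeries ℤ A p - single n' 1 * ofPowerSeries ℤ A p' ∈
      nilCoeffIdeal ℤ A) : n' ≤ n := by
  by_contra! hlt
  have hcoeff : (single n 1 * ofPowerSeries ℤ A p - single n' 1 * ofPowerSeries ℤ A p').coeff n =
      PowerSeries.constantCoeff p := by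
    simp [coeff_single_mul, PowerSeries.coeff_coe, hlt]
  exact (hcoeff ▸ h n).not_isUnit hp

theorem eq_of_ofPowerSeries_mul_eq {p p' : PowerSeries A} {g g' : LaurentSeries A}
    (hp : IsUnit p) (hg : g ∈ nonposSubring A) (hg' : g' ∈ nonposSubring A)
    (hg'1 : g' - 1 ∈ nilCoeffIdeal ℤ A) (hg0 : g.coeff 0 = 1) (hg0' : g'.coeff 0 = 1)
    (h : ofPowerSeries ℤ A p * g = ofPowerSeries ℤ A p' * g') : p = p' ∧ g = g' := by
  obtain ⟨v, hv, hg'v⟩ := exists_mul_eq_one_of_mem_nonposSubring hg' hg'1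
  obtain ⟨q, hpq⟩ := hp.exists_left_inv
  have hgv : g * v = ofPowerSeries ℤ A (q * p') := by
    calc g * v = ofPowerSeries ℤ A (q * p) * g * v := by rw [hpq, map_one, one_mul]
      _ = ofPowerSeries ℤ A q * (ofPowerSeries ℤ A p' * g') * v := by rw [← h, map_mul]; ring
      _ = ofPowerSeries ℤ A (q * p') := by rw [map_mul, mul_assoc, mul_assoc, hg'v, mul_one]
  set c := PowerSeries.constantCoeff (q * p')
  have hgvc : g * v = C c :=
    hgv.trans (ofPowerSeries_eq_C_of_mem_nonposSubring (hgv ▸ mul_mem hg hv))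
  have hgg' : g = C c * g' := by
    calc g = g * v * g' := by rw [mul_assoc, mul_comm v, hg'v, mul_one]
      _ = C c * g' := by rw [hgvc]
  have hc : c = 1 := by
    simpa [hg0, hg0', C_mul_eq_smul] using (congrArg (coeff · 0) hgg').symm
  obtain rfl : g = g' := by rw [hgg', hc, map_one, one_mul]
  refine ⟨ofPowerSeries_injective (Γ := ℤ) ?_, rfl⟩
  calc ofPowerSeries ℤ A p = ofPowerSeries ℤ A p * g * v := by rw [mul_assoc, hg'v, mul_one]
    _ = ofPowerSeries ℤ A p' := by rw [h, mul_assoc, hg'v, mul_one]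

end LaurentSeries

open HahnSeries LaurentSeries in
theorem laurent_unit_factorization_unique_general (A : Type*) [CommRing A] [Nontrivial A]
    (n n' : ℤ) (a₀ a₀' : Aˣ) (f f' : PowerSeries A) (g g' : LaurentSeries A)
    (hf  : PowerSeries.constantCoeff f = 1)
    (hf' : PowerSeries.constantCoeff f' = 1)
    (hg0 : g.coeff 0 = 1) (hgpos : ∀ i : ℤ, 0 < i → g.coeff i = 0)
    (hgneg : ∀ i : ℤ, i < 0 → IsNilpotent (g.coeff i))
    (hg0' : g'.coeff 0 = 1) (hgpos' : ∀ i : ℤ, 0 < i → g'.coeff i = 0)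
    (hgneg' : ∀ i : ℤ, i < 0 → IsNilpotent (g'.coeff i))
    (heq : HahnSeries.single n (1 : A) * HahnSeries.C (a₀ : A) *
            HahnSeries.ofPowerSeries ℤ A f * g =
          HahnSeries.single n' (1 : A) * HahnSeries.C (a₀' : A) *
            HahnSeries.ofPowerSeries ℤ A f' * g') :
    n = n' ∧ a₀ = a₀' ∧ f = f' ∧ g = g' := by
  have hfactor : ∀ (m : ℤ) (a : Aˣ) (p : PowerSeries A), single m (1 : A) * C (a : A) *
      ofPowerSeries ℤ A p = single m 1 * ofPowerSeries ℤ A (PowerSeries.C (a : A) * p) := by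
    intro m a p
    rw [map_mul, ofPowerSeries_C, mul_assoc]
  have hunit : ∀ (a : Aˣ) (p : PowerSeries A), PowerSeries.constantCoeff p = 1 →
      IsUnit (PowerSeries.constantCoeff (PowerSeries.C (a : A) * p)) := by
    intro a p hp
    simp [hp]
  rw [hfactor, hfactor] at heq
  have hg1 := sub_one_mem_nilCoeffIdeal hg0 hgpos hgneg
  have hg1' := sub_one_mem_nilCoeffIdeal hg0' hgpos' hgneg'
  obtain rfl : n = n' := le_antisymm
    (le_of_single_mul_sub_mem_nilCoeffIdeal (hunit a₀' f' hf')
      (Ideal.sub_mem_of_mul_eq_mul hg1' hg1 heq.symm))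
    (le_of_single_mul_sub_mem_nilCoeffIdeal (hunit a₀ f hf)
      (Ideal.sub_mem_of_mul_eq_mul hg1 hg1' heq))
  rw [mul_assoc, mul_assoc] at heq
  obtain ⟨hp, rfl⟩ := eq_of_ofPowerSeries_mul_eq
    (PowerSeries.isUnit_iff_constantCoeff.2 (hunit a₀ f hf)) hgpos hgpos' hg1' hg0 hg0'
    ((isUnit_single_one n).mul_left_cancel heq)
  have ha : (a₀ : A) = a₀' := by
    simpa [hf, hf'] using congrArg PowerSeries.constantCoeff hp
  refine ⟨rfl, Units.ext ha, (a₀.isUnit.map PowerSeries.C).mul_left_cancel ?_, rfl⟩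
  rw [hp, ha]

/-- Uniqueness of the factorization in Corollary 4.3.5: over a nontrivial commutative
ring with no nontrivial idempotents, if
`t^n · a₀ · f · g = t^{n'} · a₀' · f' · g'` with `a₀, a₀' ∈ Aˣ`, `f, f'` power series
with constant coefficient `1`, and `g, g'` Laurent series with coefficient `1` in
degree `0`, vanishing positive coefficients and nilpotent negative coefficients, then
`n = n'`, `a₀ = a₀'`, `f = f'` and `g = g'`. -/
theorem laurent_unit_factorization_unique (A : Type*) [CommRing A] [Nontrivial A]
    (hA : ∀ e : A, IsIdempotentElem e → e = 0 ∨ e = 1)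
    (n n' : ℤ) (a₀ a₀' : Aˣ) (f f' : PowerSeries A) (g g' : LaurentSeries A)
    (hf  : PowerSeries.constantCoeff f = 1)
    (hf' : PowerSeries.constantCoeff f' = 1)
    (hg0 : g.coeff 0 = 1) (hgpos : ∀ i : ℤ, 0 < i → g.coeff i = 0)
    (hgneg : ∀ i : ℤ, i < 0 → IsNilpotent (g.coeff i))
    (hg0' : g'.coeff 0 = 1) (hgpos' : ∀ i : ℤ, 0 < i → g'.coeff i = 0)
    (hgneg' : ∀ i : ℤ, i < 0 → IsNilpotent (g'.coeff i))
    (heq : HahnSeries.single n (1 : A) * HahnSeries.C (a₀ : A) *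
            HahnSeries.ofPowerSeries ℤ A f * g =
          HahnSeries.single n' (1 : A) * HahnSeries.C (a₀' : A) *
            HahnSeries.ofPowerSeries ℤ A f' * g') :
    n = n' ∧ a₀ = a₀' ∧ f = f' ∧ g = g' :=
  laurent_unit_factorization_unique_general A n n' a₀ a₀' f f' g g' hf hf' hg0 hgpos hgneg hg0'
    hgpos' hgneg' heq
end

section
/- Let A be a nontrivial reduced commutative ring with no nontrivial idempotents, and let a be a nonzero Laurent series in A((t)) with lowest nonzero coefficient a_n (i.e. the coefficient of t^n in a is a_n ≠ 0 and the coefficient of t^i in a is 0 for all i < n). Then a is a unit of A((t)) if and only if a_n is a unit of A. -/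
/-!
Write `a = t ^ n * f` with `f ∈ A⟦t⟧` and `f₀ = aₙ`. A series whose leading coefficient is a unit
is invertible, so only the forward direction needs work. Since `A((t))` is `A⟦t⟧` localized away
from `t`, if `a` is a unit then `f * g = t ^ N` for some power series `g`. Over a reduced ring,
`t ^ N ∣ f * g` forces `fᵢ * gⱼ = 0` whenever `i + j < N`: by induction on `i + j`, multiplying the
vanishing coefficient of degree `i + j` of `f * g` by `fᵢ * gⱼ` leaves only `(fᵢ * gⱼ) ^ 2`.
Multiplying the coefficient identity of degree `N` by `e = f₀ * g_N` then shows that `e` is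
idempotent. If `e = 0`, then `t ^ (N + 1) ∣ f₀ * g`, hence `t ^ (N + 1) ∣ f₀ * t ^ N`, so `f₀ = 0`.
Therefore `e = 1` and `f₀` is a unit.
-/

open PowerSeries HahnSeries Finset
open scoped LaurentSeries

namespace PowerSeries

variable {R : Type*} [CommSemiring R] [IsReduced R] {f g : R⟦X⟧}

theorem coeff_mul_coeff_eq_zero_of_X_pow_dvd_mul {S : ℕ} (h : X ^ S ∣ f * g) {i j : ℕ}
    (hij : i + j < S) : coeff i f * coeff j g = 0 := by
  induction hs : i + j using Nat.strong_induction_on generalizing i j with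
  | _ s ih =>
  refine IsReduced.eq_zero _ ⟨2, ?_⟩
  have hsum : ∑ p ∈ antidiagonal s, coeff p.1 f * coeff p.2 g * (coeff i f * coeff j g) = 0 := by
    rw [← sum_mul, ← coeff_mul, X_pow_dvd_iff.mp h s (hs ▸ hij), zero_mul]
  rwa [sum_eq_single (i, j) ?_ (by simp [hs]), ← sq] at hsum
  rintro ⟨p, q⟩ hpq hne
  rw [HasAntidiagonal.mem_antidiagonal] at hpq
  rcases lt_or_gt_of_ne (fun hp : p = i => hne (by ext <;> omega)) with hp | hp
  · calc _ = (coeff p f * coeff j g) * (coeff i f * coeff q g) := by ring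
      _ = 0 := by rw [ih (p + j) (by omega) (by omega) rfl, zero_mul]
  · calc _ = (coeff i f * coeff q g) * (coeff p f * coeff j g) := by ring
      _ = 0 := by rw [ih (i + q) (by omega) (by omega) rfl, zero_mul]

theorem coeff_zero_mul_coeff_eq_zero_of_mul_eq_X_pow {N : ℕ} (h : f * g = X ^ N) {j : ℕ}
    (hj : j < N) : coeff 0 f * coeff j g = 0 :=
  coeff_mul_coeff_eq_zero_of_X_pow_dvd_mul (dvd_of_eq h.symm) (by rwa [zero_add])

theorem isIdempotentElem_coeff_zero_mul_coeff_of_mul_eq_X_pow {N : ℕ} (h : f * g = X ^ N) :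
    IsIdempotentElem (coeff 0 f * coeff N g) := by
  set e := coeff 0 f * coeff N g
  have hsum : ∑ p ∈ antidiagonal N, coeff p.1 f * coeff p.2 g * e = e := by
    rw [← sum_mul, ← coeff_mul, h, coeff_X_pow_self, one_mul]
  rw [sum_eq_single (0, N) ?_ (by simp)] at hsum
  · exact hsum
  rintro ⟨p, q⟩ hpq hne
  rw [HasAntidiagonal.mem_antidiagonal] at hpq
  have hq : q < N := by
    rcases Nat.eq_zero_or_pos p with rfl | hp
    · exact absurd (by ext <;> simp; omega) hne
    · omega
  calc _ = (coeff 0 f * coeff q g) * (coeff p f * coeff N g) := by ring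
    _ = 0 := by rw [coeff_zero_mul_coeff_eq_zero_of_mul_eq_X_pow h hq, zero_mul]

theorem coeff_zero_eq_zero_of_mul_eq_X_pow {N : ℕ} (h : f * g = X ^ N)
    (he : coeff 0 f * coeff N g = 0) : coeff 0 f = 0 := by
  have hg : X ^ (N + 1) ∣ C (coeff 0 f) * g := X_pow_dvd_iff.mpr fun j hj => by
    rw [coeff_C_mul]
    rcases (Nat.lt_succ_iff.mp hj).lt_or_eq with hj | rfl
    · exact coeff_zero_mul_coeff_eq_zero_of_mul_eq_X_pow h hj
    · exact he
  have hX : X ^ (N + 1) ∣ C (coeff 0 f) * X ^ N := by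
    rw [← h, mul_left_comm]
    exact dvd_mul_of_dvd_right hg f
  simpa using X_pow_dvd_iff.mp hX N N.lt_succ_self

theorem isUnit_coeff_zero_of_dvd_X_pow (hR : ∀ e : R, IsIdempotentElem e → e = 0 ∨ e = 1)
    {N : ℕ} (hf : f ∣ X ^ N) (h0 : coeff 0 f ≠ 0) : IsUnit (coeff 0 f) := by
  obtain ⟨g, hg⟩ := hf
  rcases hR _ (isIdempotentElem_coeff_zero_mul_coeff_of_mul_eq_X_pow hg.symm) with he | he
  · exact absurd (coeff_zero_eq_zero_of_mul_eq_X_pow hg.symm he) h0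
  · exact .of_mul_eq_one _ he

end PowerSeries

theorem HahnSeries.order_eq_of_coeff_ne_zero {Γ R : Type*} [Zero Γ] [LinearOrder Γ] [Zero R]
    {x : HahnSeries Γ R} {n : Γ} (hn : x.coeff n ≠ 0) (hlow : ∀ i < n, x.coeff i = 0) :
    x.order = n :=
  (order_le_of_coeff_ne_zero hn).antisymm <| not_lt.mp fun h =>
    (ne_zero_of_coeff_ne_zero hn) (coeff_order_eq_zero.mp (hlow _ h))

theorem laurent_isUnit_iff_of_reduced_general (A : Type*) [CommRing A]
    [IsReduced A] (hA : ∀ e : A, IsIdempotentElem e → e = 0 ∨ e = 1)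
    (a : LaurentSeries A) (n : ℤ)
    (hn : a.coeff n ≠ 0) (hlow : ∀ i : ℤ, i < n → a.coeff i = 0) :
    IsUnit a ↔ IsUnit (a.coeff n) := by
  have horder : a.order = n := order_eq_of_coeff_ne_zero hn hlow
  have hpart : coeff 0 a.powerSeriesPart = a.coeff n := by
    rw [LaurentSeries.powerSeriesPart_coeff, horder, Nat.cast_zero, add_zero]
  refine ⟨fun ha => ?_, fun hu => isUnit_of_isUnit_leadingCoeff_AddUnitOrder
    (by rwa [leadingCoeff_eq, horder]) (AddGroup.isAddUnit _)⟩
  have hunit : IsUnit (algebraMap A⟦X⟧ A⸨X⸩ a.powerSeriesPart) :=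
    isUnit_of_mul_isUnit_right (a.single_order_mul_powerSeriesPart ▸ ha)
  obtain ⟨N, hN⟩ := (IsLocalization.Away.algebraMap_isUnit_iff X).mp hunit
  exact hpart ▸ isUnit_coeff_zero_of_dvd_X_pow hA hN (hpart ▸ hn)

/-- Specialization of Lemma 4.3.4 to reduced rings: over a nontrivial reduced
commutative ring with no nontrivial idempotents, a nonzero Laurent series with lowest
nonzero coefficient `a.coeff n` is a unit of `A((t))` iff `a.coeff n` is a unit of `A`. -/
theorem laurent_isUnit_iff_of_reduced (A : Type*) [CommRing A] [Nontrivial A]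
    [IsReduced A] (hA : ∀ e : A, IsIdempotentElem e → e = 0 ∨ e = 1)
    (a : LaurentSeries A) (n : ℤ)
    (hn : a.coeff n ≠ 0) (hlow : ∀ i : ℤ, i < n → a.coeff i = 0) :
    IsUnit a ↔ IsUnit (a.coeff n) :=
  laurent_isUnit_iff_of_reduced_general A hA a n hn hlow
end

section
/- Let F be a field and N ≥ 1. Then there exist a natural number M and sequences of indices i_1, …, i_M and j_1, …, j_M in {1, …, N} with i_ν ≠ j_ν for every ν, such that every matrix in SL_N(F) can be written as the ordered product e_{i_1 j_1}(a_1) · e_{i_2 j_2}(a_2) ⋯ e_{i_M j_M}(a_M) for some a_1, …, a_M ∈ F, where e_{ij}(a) denotes the elementary matrix equal to the identity except for the entry a in position (i,j). -/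
/-!
Gaussian elimination brings an `n × n` matrix to diagonal form by row and column
transvections whose number is bounded in terms of `n` alone. For `g ∈ SL_n(F)` the diagonal
matrix `D` reached has determinant one, so `D = ∏_{k ≠ i} diag(D_k at k, D_k⁻¹ at i)`, and each
factor is a product of four transvections. Hence every `g` is a product of at most `K`
transvections, with `K` depending only on `n`. A single transvection, and the identity, is a
product along the list of all off-diagonal positions (with all other coefficients zero), so `K`
passes through that list form the required fixed word.
-/

open Matrix Matrix.Pivot Matrix.TransvectionStruct Sum Pointwise

namespace Matrix

section Words
variable {R n : Type*} [CommRing R] [Fintype n]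

variable (n) in
noncomputable def offDiagWord : List (n × n) :=
  (Finset.univ : Finset n).offDiag.toList

theorem mem_offDiagWord {p : n × n} : p ∈ offDiagWord n ↔ p.1 ≠ p.2 := by
  simp [offDiagWord]

variable [DecidableEq n]

def wordProducts : List (n × n) → Set (Matrix n n R)
  | [] => 1
  | p :: W => Set.range (transvection p.1 p.2) * wordProducts W

theorem wordProducts_append (W₁ W₂ : List (n × n)) :
    wordProducts (W₁ ++ W₂) = (wordProducts W₁ * wordProducts W₂ : Set (Matrix n n R)) := by
  induction W₁ with
  | nil => simp [wordProducts]
  | cons p W ih => simp [wordProducts, ih, mul_assoc]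

theorem wordProducts_flatten_replicate (k : ℕ) (W : List (n × n)) :
    wordProducts (List.replicate k W).flatten = (wordProducts W ^ k : Set (Matrix n n R)) := by
  induction k with
  | zero => rfl
  | succ k ih => rw [List.replicate_succ, List.flatten_cons, wordProducts_append, ih, pow_succ']

theorem one_mem_wordProducts (W : List (n × n)) : (1 : Matrix n n R) ∈ wordProducts W := by
  induction W with
  | nil => rfl
  | cons p W ih => exact ⟨1, ⟨0, transvection_zero _ _⟩, 1, ih, mul_one 1⟩

theorem transvection_mem_wordProducts {W : List (n × n)} {p : n × n} (hp : p ∈ W) (c : R) :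
    transvection p.1 p.2 c ∈ wordProducts W := by
  induction W with
  | nil => cases hp
  | cons q W ih =>
    obtain rfl | hp := List.mem_cons.1 hp
    · exact ⟨_, ⟨c, rfl⟩, 1, one_mem_wordProducts W, mul_one _⟩
    · exact ⟨1, ⟨0, transvection_zero _ _⟩, _, ih hp, one_mul _⟩

theorem mem_wordProducts_iff {W : List (n × n)} {g : Matrix n n R} :
    g ∈ wordProducts W ↔ ∃ a : Fin W.length → R,
      g = (List.ofFn fun ν => transvection (W.get ν).1 (W.get ν).2 (a ν)).prod := by
  induction W generalizing g with
  | nil => simp [wordProducts]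
  | cons p W ih =>
    simp [wordProducts, Set.mem_mul, ih, Fin.exists_fin_succ_pi, List.ofFn_succ, eq_comm]

theorem TransvectionStruct.toMatrix_mem_wordProducts_offDiagWord (t : TransvectionStruct n R) :
    t.toMatrix ∈ wordProducts (offDiagWord n) :=
  transvection_mem_wordProducts (p := (t.i, t.j)) (mem_offDiagWord.2 t.hij) t.c

theorem list_prod_mem_wordProducts_offDiagWord_pow {K : ℕ} {L : List (TransvectionStruct n R)}
    (hL : L.length ≤ K) : (L.map toMatrix).prod ∈ wordProducts (offDiagWord n) ^ K := by
  induction L generalizing K with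
  | nil => exact Set.one_mem_pow (one_mem_wordProducts _)
  | cons t L ih =>
    obtain ⟨K, rfl⟩ : ∃ K', K = K' + 1 := Nat.exists_eq_add_one.2 (by simp at hL; omega)
    rw [List.map_cons, List.prod_cons, pow_succ']
    exact Set.mul_mem_mul t.toMatrix_mem_wordProducts_offDiagWord (ih (by simpa using hL))

theorem diagonal_prod_mem_pow {ι : Type*} {S : Set (Matrix n n R)} {m : ℕ} (s : Finset ι)
    (f : ι → n → R) (h : ∀ k ∈ s, diagonal (f k) ∈ S ^ m) :
    diagonal (∏ k ∈ s, f k) ∈ S ^ (m * s.card) := by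
  classical
  induction s using Finset.induction_on with
  | empty => simp
  | insert a s ha ih =>
    have hmul : diagonal (f a * ∏ k ∈ s, f k) = diagonal (f a) * diagonal (∏ k ∈ s, f k) :=
      (diagonal_mul_diagonal _ _).symm
    rw [Finset.prod_insert ha, hmul, Finset.card_insert_of_notMem ha, mul_add_one, add_comm,
      pow_add]
    exact Set.mul_mem_mul (h a (Finset.mem_insert_self a s))
      (ih fun k hk => h k (Finset.mem_insert_of_mem hk))

end Words

section Diagonal
variable {F n : Type*} [Field F] [DecidableEq n] [Fintype n]

theorem transvection_mul_transvection_mul_transvection_mul_transvection {i j : n} (hij : i ≠ j)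
    {e : F} (he : e ≠ 0) :
    transvection i j (e - 1) * transvection j i 1 * transvection i j (e⁻¹ - 1) *
      transvection j i (-e) = diagonal (Pi.mulSingle i e * Pi.mulSingle j e⁻¹) := by
  ext a b
  obtain (rfl | rfl) | ⟨hai, haj⟩ : (a = i ∨ a = j) ∨ (a ≠ i ∧ a ≠ j) := by tauto
  all_goals
    simp only [Matrix.mul_assoc, transvection_mul_apply_same, transvection_mul_apply_of_ne, ne_eq,
      Ne.symm hij, not_false_eq_true, *]
    simp [transvection, one_apply, single_apply, diagonal_apply]
    grind

theorem diagonal_mulSingle_mul_mulSingle_inv_mem_pow {i j : n} (hij : i ≠ j) {e : F}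
    (he : e ≠ 0) :
    diagonal (Pi.mulSingle i e * Pi.mulSingle j e⁻¹ : n → F) ∈
      wordProducts (offDiagWord n) ^ 4 := by
  rw [← transvection_mul_transvection_mul_transvection_mul_transvection hij he]
  have mem {k l : n} (hkl : k ≠ l) (c : F) :=
    transvection_mem_wordProducts (p := (k, l)) (mem_offDiagWord.2 hkl) c
  simp only [pow_succ, pow_zero, one_mul]
  exact Set.mul_mem_mul (Set.mul_mem_mul (Set.mul_mem_mul (mem hij _) (mem hij.symm _))
    (mem hij _)) (mem hij.symm _)

theorem prod_erase_mulSingle_mul_mulSingle_inv {D : n → F} (hD : ∏ k, D k = 1) (i : n) :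
    ∏ k ∈ Finset.univ.erase i, Pi.mulSingle k (D k) * Pi.mulSingle i (D k)⁻¹ = D := by
  funext m
  simp only [Finset.prod_apply, Pi.mul_apply, Pi.mulSingle_apply, Finset.prod_mul_distrib]
  rcases eq_or_ne m i with rfl | hmi
  · simpa [Finset.prod_inv_distrib] using
      inv_eq_of_mul_eq_one_left ((Finset.mul_prod_erase _ D (Finset.mem_univ m)).trans hD)
  · simp [hmi]

theorem diagonal_mem_wordProducts_offDiagWord_pow {D : n → F} (hD : ∏ k, D k = 1) :
    diagonal D ∈ wordProducts (offDiagWord n) ^ (4 * Fintype.card n) := by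
  cases isEmpty_or_nonempty n with
  | inl => exact Subsingleton.elim 1 (diagonal D) ▸ Set.one_mem_pow (one_mem_wordProducts _)
  | inr hn =>
    obtain ⟨i⟩ := hn
    have hD₀ : ∀ k, D k ≠ 0 := fun k hk => by
      simp [Finset.prod_eq_zero (Finset.mem_univ k) hk] at hD
    rw [← prod_erase_mulSingle_mul_mulSingle_inv hD i]
    have hfactor (k : n) (hk : k ∈ Finset.univ.erase i) :=
      diagonal_mulSingle_mul_mulSingle_inv_mem_pow (Finset.ne_of_mem_erase hk) (hD₀ k)
    refine Set.pow_subset_pow_right (one_mem_wordProducts _) ?_ (diagonal_prod_mem_pow _ _ hfactor)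
    gcongr
    exact Finset.card_le_univ _

end Diagonal

section Reduction
variable {R n p : Type*} [CommRing R] [Fintype n] [DecidableEq n] [Fintype p] [DecidableEq p]

def TransvecReduces (K : ℕ) (M N : Matrix n n R) : Prop :=
  ∃ L L' : List (TransvectionStruct n R), L.length ≤ K ∧ L'.length ≤ K ∧
    (L.map toMatrix).prod * M * (L'.map toMatrix).prod = N

namespace TransvecReduces
variable {K K₁ K₂ : ℕ} {M N P : Matrix n n R}

theorem refl (K : ℕ) (M : Matrix n n R) : TransvecReduces K M M :=
  ⟨[], [], Nat.zero_le K, Nat.zero_le K, by simp⟩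

theorem trans (h₁ : TransvecReduces K₁ M N) (h₂ : TransvecReduces K₂ N P) :
    TransvecReduces (K₁ + K₂) M P := by
  obtain ⟨L₁, L₁', hL₁, hL₁', rfl⟩ := h₁
  obtain ⟨L₂, L₂', hL₂, hL₂', rfl⟩ := h₂
  refine ⟨L₂ ++ L₁, L₁' ++ L₂', by simp; omega, by simp; omega, ?_⟩
  simp only [List.map_append, List.prod_append, Matrix.mul_assoc]

theorem symm (h : TransvecReduces K M N) : TransvecReduces K N M := by
  obtain ⟨L, L', hL, hL', rfl⟩ := h
  refine ⟨L.reverse.map TransvectionStruct.inv, L'.reverse.map TransvectionStruct.inv,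
    by simpa using hL, by simpa using hL', ?_⟩
  simp only [List.map_map, ← Matrix.mul_assoc, reverse_inv_prod_mul_prod, Matrix.one_mul]
  rw [Matrix.mul_assoc, prod_mul_reverse_inv_prod, Matrix.mul_one]

theorem fromBlocks_zero_zero (h : TransvecReduces K M N) (C : Matrix p p R) :
    TransvecReduces K (fromBlocks M 0 0 C) (fromBlocks N 0 0 C) := by
  obtain ⟨L, L', hL, hL', rfl⟩ := h
  refine ⟨L.map (sumInl p), L'.map (sumInl p), by simpa using hL, by simpa using hL', ?_⟩
  simp only [List.map_map, sumInl_toMatrix_prod_mul, mul_sumInl_toMatrix_prod]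

theorem reindex (h : TransvecReduces K M N) (e : n ≃ p) :
    TransvecReduces K (reindexAlgEquiv R R e M) (reindexAlgEquiv R R e N) := by
  obtain ⟨L, L', hL, hL', rfl⟩ := h
  refine ⟨L.map (reindexEquiv e), L'.map (reindexEquiv e), by simpa using hL,
    by simpa using hL', ?_⟩
  simp only [List.map_map, toMatrix_reindexEquiv_prod, map_mul]

end TransvecReduces

end Reduction

section Pivot
variable {F : Type*} [Field F] {r : ℕ} (M : Matrix (Fin r ⊕ Unit) (Fin r ⊕ Unit) F)

theorem transvecReduces_listTransvecCol_mul_mul_listTransvecRow :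
    TransvecReduces r M ((listTransvecCol M).prod * M * (listTransvecRow M).prod) := by
  let L : List (TransvectionStruct (Fin r ⊕ Unit) F) :=
    List.ofFn fun i : Fin r =>
      ⟨inl i, inr (), by simp, -M (inl i) (inr ()) / M (inr ()) (inr ())⟩
  let L' : List (TransvectionStruct (Fin r ⊕ Unit) F) :=
    List.ofFn fun i : Fin r =>
      ⟨inr (), inl i, by simp, -M (inr ()) (inl i) / M (inr ()) (inr ())⟩
  refine ⟨L, L', by simp [L], by simp [L'], ?_⟩
  simp [L, L', listTransvecCol, listTransvecRow, Function.comp_def]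

theorem exists_transvecReduces_one_apply_inr_inr_ne_zero (hM : ¬IsTwoBlockDiagonal M) :
    ∃ N, TransvecReduces 1 M N ∧ N (inr ()) (inr ()) ≠ 0 := by
  by_cases hM₀ : M (inr ()) (inr ()) = 0
  swap
  · exact ⟨M, TransvecReduces.refl 1 M, hM₀⟩
  simp only [IsTwoBlockDiagonal, toBlocks₁₂, toBlocks₂₁, ← Matrix.ext_iff, not_and_or,
    not_forall] at hM
  rcases hM with ⟨i, ⟨⟩, hi⟩ | ⟨⟨⟩, i, hi⟩
  · refine ⟨transvection (inr ()) (inl i) 1 * M,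
      ⟨[⟨inr (), inl i, by simp, 1⟩], [], le_rfl, by simp, by simp⟩, ?_⟩
    simpa [hM₀] using hi
  · refine ⟨M * transvection (inl i) (inr ()) 1,
      ⟨[], [⟨inl i, inr (), by simp, 1⟩], by simp, le_rfl, by simp⟩, ?_⟩
    simpa [hM₀] using hi

theorem exists_transvecReduces_isTwoBlockDiagonal :
    ∃ N, TransvecReduces (1 + r) M N ∧ IsTwoBlockDiagonal N := by
  by_cases hM : IsTwoBlockDiagonal M
  · exact ⟨M, TransvecReduces.refl _ M, hM⟩
  obtain ⟨N, hMN, hN⟩ := exists_transvecReduces_one_apply_inr_inr_ne_zero M hM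
  exact ⟨_, hMN.trans (transvecReduces_listTransvecCol_mul_mul_listTransvecRow N),
    isTwoBlockDiagonal_listTransvecCol_mul_mul_listTransvecRow N hN⟩

end Pivot

section Bounds
variable {F : Type*} [Field F]

theorem exists_transvecReduces_diagonal_fin (r : ℕ) :
    ∃ K, ∀ M : Matrix (Fin r) (Fin r) F, ∃ D, TransvecReduces K M (diagonal D) := by
  induction r with
  | zero =>
    refine ⟨0, fun M => ⟨0, ?_⟩⟩
    convert TransvecReduces.refl 0 M
    exact Subsingleton.elim _ _
  | succ r ih =>
    obtain ⟨K, hK⟩ := ih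
    refine ⟨1 + r + K, fun M => ?_⟩
    let e : Fin (r + 1) ≃ Fin r ⊕ Unit := Fintype.equivOfCardEq (by simp)
    obtain ⟨N, hMN, hN⟩ := exists_transvecReduces_isTwoBlockDiagonal (reindexAlgEquiv F F e M)
    obtain ⟨D, hD⟩ := hK N.toBlocks₁₁
    have hN' : fromBlocks N.toBlocks₁₁ 0 0 (diagonal fun _ => N (inr ()) (inr ())) = N := by
      conv_rhs => rw [← fromBlocks_toBlocks N, hN.1, hN.2]
      congr 1
    have hND := hD.fromBlocks_zero_zero (diagonal fun _ : Unit => N (inr ()) (inr ()))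
    rw [hN', fromBlocks_diagonal] at hND
    exact ⟨Sum.elim D (fun _ => N (inr ()) (inr ())) ∘ e,
      by simpa using (hMN.trans hND).reindex e.symm⟩

theorem exists_transvecReduces_diagonal (n : Type*) [Fintype n] [DecidableEq n] :
    ∃ K, ∀ M : Matrix n n F, ∃ D, TransvecReduces K M (diagonal D) := by
  obtain ⟨K, hK⟩ := exists_transvecReduces_diagonal_fin (F := F) (Fintype.card n)
  refine ⟨K, fun M => ?_⟩
  let e := Fintype.equivFin n
  obtain ⟨D, hD⟩ := hK (reindexAlgEquiv F F e M)
  exact ⟨D ∘ e, by simpa using hD.reindex e.symm⟩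

theorem exists_forall_specialLinearGroup_mem_wordProducts_offDiagWord_pow (n : Type*)
    [DecidableEq n] [Fintype n] :
    ∃ K, ∀ g : SpecialLinearGroup n F,
      (g : Matrix n n F) ∈ wordProducts (offDiagWord n) ^ K := by
  obtain ⟨K, hK⟩ := exists_transvecReduces_diagonal (F := F) n
  refine ⟨K + 4 * Fintype.card n + K, fun g => ?_⟩
  obtain ⟨D, L, L', hL, hL', hg⟩ := (hK g).imp fun _ h => h.symm
  have hD : ∏ k, D k = 1 := by
    simpa [← hg, det_toMatrix_prod] using g.det_coe
  rw [← hg, pow_add, pow_add]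
  exact Set.mul_mem_mul (Set.mul_mem_mul (list_prod_mem_wordProducts_offDiagWord_pow hL)
    (diagonal_mem_wordProducts_offDiagWord_pow hD)) (list_prod_mem_wordProducts_offDiagWord_pow hL')

end Bounds

end Matrix

theorem sl_product_of_fixed_transvections_general (F : Type*) [Field F] (N : ℕ) :
    ∃ (M : ℕ) (ij : Fin M → Fin N × Fin N),
      (∀ ν, (ij ν).1 ≠ (ij ν).2) ∧
      ∀ g : Matrix.SpecialLinearGroup (Fin N) F,
        ∃ a : Fin M → F,
          (g : Matrix (Fin N) (Fin N) F) =
            (List.ofFn fun ν => Matrix.transvection (ij ν).1 (ij ν).2 (a ν)).prod := by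
  obtain ⟨K, hK⟩ :=
    exists_forall_specialLinearGroup_mem_wordProducts_offDiagWord_pow (F := F) (Fin N)
  let W := (List.replicate K (offDiagWord (Fin N))).flatten
  have hW : ∀ p ∈ W, p.1 ≠ p.2 := by simp [W, List.mem_flatten, mem_offDiagWord]
  refine ⟨W.length, W.get, fun ν => hW _ (W.get_mem ν), fun g => mem_wordProducts_iff.1 ?_⟩
  rw [wordProducts_flatten_replicate]
  exact hK g

/-- The claim from the proof of Lemma 5.4.6: for a field `F` and `N ≥ 1` there are a
natural number `M` and a fixed sequence of index pairs `(i_ν, j_ν)` with `i_ν ≠ j_ν`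
such that every matrix in `SL_N(F)` is the ordered product
`e_{i_1 j_1}(a_1) ⋯ e_{i_M j_M}(a_M)` of elementary matrices, for some
`a_1, …, a_M ∈ F`. -/
theorem sl_product_of_fixed_transvections (F : Type*) [Field F] (N : ℕ) (hN : 1 ≤ N) :
    ∃ (M : ℕ) (ij : Fin M → Fin N × Fin N),
      (∀ ν, (ij ν).1 ≠ (ij ν).2) ∧
      ∀ g : Matrix.SpecialLinearGroup (Fin N) F,
        ∃ a : Fin M → F,
          (g : Matrix (Fin N) (Fin N) F) =
            (List.ofFn fun ν => Matrix.transvection (ij ν).1 (ij ν).2 (a ν)).prod :=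
  sl_product_of_fixed_transvections_general F N
end
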